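/- arXiv:2407.02634 — 2 statements merged into one kernel-verified Lean document; each statement's English description precedes it below -/
import Mathlib

section
/- Let n = 5 and for each subset χ of {A,B,C,D,E} with 2 ≤ |χ| ≤ 4, set ℓ⋆(χ) = (2/|χ|)/C(5,|χ|). Let c(ψ₃ | χ) be the rooted Wagner parsimony cost of site pattern χ on the balanced topology ψ₃ = (((AB)(CD))E) and c(ψ₁ | χ) the cost on the caterpillar ψ₁ = ((((AB)C)D)E). Then ∑_χ c(ψ₃|χ) ℓ⋆(χ) = 43/10 and ∑_χ c(ψ₁|χ) ℓ⋆(χ) = 13/3; in particular 43/10 < 13/3. -/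
/-- Rooted binary trees with leaves labeled by taxa in `Fin 5`. -/
inductive RTree where
  | leaf : Fin 5 → RTree
  | node : RTree → RTree → RTree

/-- Fitch's algorithm: returns the set of optimal root states (as `Finset Bool`,
`true` = derived state 1) and the minimum number of mutations within the tree
for the binary character `χ` (the set of taxa with derived state). -/
def fitch (χ : Finset (Fin 5)) : RTree → Finset Bool × ℕ
  | .leaf i => ({decide (i ∈ χ)}, 0)
  | .node l r =>
      let Sc := fitch χ l
      let Td := fitch χ r
      if (Sc.1 ∩ Td.1).Nonempty then (Sc.1 ∩ Td.1, Sc.2 + Td.2)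
      else (Sc.1 ∪ Td.1, Sc.2 + Td.2 + 1)

/-- Rooted Wagner parsimony cost: minimum number of mutations to resolve `χ` on `ψ`
assuming ancestral state 0 (= `false`), allowing a `0 → 1` mutation above the root. -/
def rootedCost (ψ : RTree) (χ : Finset (Fin 5)) : ℕ :=
  if false ∈ (fitch χ ψ).1 then (fitch χ ψ).2 else (fitch χ ψ).2 + 1

/-- Caterpillar topology `ψ₁ = ((((AB)C)D)E)`. -/
def psi1 : RTree :=
  .node (.node (.node (.node (.leaf 0) (.leaf 1)) (.leaf 2)) (.leaf 3)) (.leaf 4)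

/-- Balanced topology `ψ₃ = (((AB)(CD))E)`. -/
def psi3 : RTree :=
  .node (.node (.node (.leaf 0) (.leaf 1)) (.node (.leaf 2) (.leaf 3))) (.leaf 4)

lemma weight_eq (c : ℕ) (χ : Finset (Fin 5))
    (hχ : χ ∈ Finset.univ.powerset.filter
        (fun χ : Finset (Fin 5) => 2 ≤ χ.card ∧ χ.card ≤ 4)) :
    (c : ℝ) * (((2 : ℝ) / (χ.card : ℝ)) / ((Nat.choose 5 χ.card : ℕ) : ℝ))
      = ((c * (if χ.card = 2 then 3 else if χ.card = 3 then 2 else 3) : ℕ) : ℝ) / 30 := by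
  obtain ⟨-, h2, h4⟩ := Finset.mem_filter.mp hχ
  interval_cases h : χ.card <;> push_cast <;> norm_num [Nat.choose] <;> ring

lemma key3 : (∑ χ ∈ Finset.univ.powerset.filter
        (fun χ : Finset (Fin 5) => 2 ≤ χ.card ∧ χ.card ≤ 4),
      (rootedCost psi3 χ : ℝ) * (((2 : ℝ) / (χ.card : ℝ)) / ((Nat.choose 5 χ.card : ℕ) : ℝ)))
        = 43 / 10 := by
  rw [Finset.sum_congr rfl (fun χ hχ => weight_eq (rootedCost psi3 χ) χ hχ),
    ← Finset.sum_div, ← Nat.cast_sum,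
    show (∑ χ ∈ Finset.univ.powerset.filter
        (fun χ : Finset (Fin 5) => 2 ≤ χ.card ∧ χ.card ≤ 4),
      rootedCost psi3 χ * (if χ.card = 2 then 3 else if χ.card = 3 then 2 else 3)) = 129 from by decide]
  norm_num

lemma key1 : (∑ χ ∈ Finset.univ.powerset.filter
        (fun χ : Finset (Fin 5) => 2 ≤ χ.card ∧ χ.card ≤ 4),
      (rootedCost psi1 χ : ℝ) * (((2 : ℝ) / (χ.card : ℝ)) / ((Nat.choose 5 χ.card : ℕ) : ℝ)))
        = 13 / 3 := by
  rw [Finset.sum_congr rfl (fun χ hχ => weight_eq (rootedCost psi1 χ) χ hχ),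
    ← Finset.sum_div, ← Nat.cast_sum,
    show (∑ χ ∈ Finset.univ.powerset.filter
        (fun χ : Finset (Fin 5) => 2 ≤ χ.card ∧ χ.card ≤ 4),
      rootedCost psi1 χ * (if χ.card = 2 then 3 else if χ.card = 3 then 2 else 3)) = 130 from by decide]
  norm_num

/-- Expected parsimony cost per locus on the 5-taxa star species tree, where the
expected branch length for a pattern `χ` is `ℓ⋆(χ) = (2/|χ|)/C(5,|χ|)`:
the balanced topology has cost `43/10`, the caterpillar `13/3`, and `43/10 < 13/3`. -/
theorem star_tree_parsimony_costs_five_taxa :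
    (∑ χ ∈ Finset.univ.powerset.filter
        (fun χ : Finset (Fin 5) => 2 ≤ χ.card ∧ χ.card ≤ 4),
      (rootedCost psi3 χ : ℝ) * (((2 : ℝ) / (χ.card : ℝ)) / ((Nat.choose 5 χ.card : ℕ) : ℝ)))
        = 43 / 10 ∧
    (∑ χ ∈ Finset.univ.powerset.filter
        (fun χ : Finset (Fin 5) => 2 ≤ χ.card ∧ χ.card ≤ 4),
      (rootedCost psi1 χ : ℝ) * (((2 : ℝ) / (χ.card : ℝ)) / ((Nat.choose 5 χ.card : ℕ) : ℝ)))
        = 13 / 3 ∧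
    (43 / 10 : ℝ) < 13 / 3 := by
  exact ⟨key3, key1, by norm_num⟩
end

section
/- Define F(x) = 3x - 1 + e^{-x} - e^{-x}(1 - e^{-x} + (1/10)e^{-4x}) for x ≥ 0. Then F(0) < 0, F(1) > 0, and F is strictly increasing on [0,∞); hence F has exactly one root in (0,1). -/
open Real in
/-- `F(x) = 3x - 1 + e^{-x} - e^{-x}(1 - e^{-x} + (1/10)e^{-4x})` satisfies
`F(0) < 0`, `F(1) > 0`, is strictly increasing on `[0,∞)`, and hence has exactly
one root in `(0,1)`. -/
theorem critical_threshold_function (F : ℝ → ℝ)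
    (hF : ∀ x, F x
      = 3 * x - 1 + exp (-x) - exp (-x) * (1 - exp (-x) + (1/10) * exp (-4 * x))) :
    F 0 < 0 ∧ 0 < F 1 ∧ StrictMonoOn F (Set.Ici 0) ∧
      ∃! x : ℝ, x ∈ Set.Ioo (0 : ℝ) 1 ∧ F x = 0 := by
  have hFe : F = fun x => 3 * x - 1 + exp (-2 * x) - (1/10) * exp (-5 * x) := by
    funext x
    rw [hF, show (-2 : ℝ) * x = -x + -x by ring, show (-5 : ℝ) * x = -x + -4 * x by ring,
      exp_add, exp_add]
    ring
  have h0 : F 0 < 0 := by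
    rw [hFe]; norm_num
  have h1 : 0 < F 1 := by
    rw [hFe]
    simp only
    norm_num
    have h2 : (0:ℝ) < exp (-2) := exp_pos _
    have h5 : exp (-5 : ℝ) < 1 := exp_lt_one_iff.mpr (by norm_num)
    linarith
  have hderiv : ∀ x : ℝ, HasDerivAt F (3 - 2 * exp (-2 * x) + (1/2) * exp (-5 * x)) x := by
    intro x
    rw [hFe]
    have l2 : HasDerivAt (fun y : ℝ => -2 * y) (-2) x := by
      simpa using (hasDerivAt_id x).const_mul (-2 : ℝ)
    have l5 : HasDerivAt (fun y : ℝ => -5 * y) (-5) x := by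
      simpa using (hasDerivAt_id x).const_mul (-5 : ℝ)
    have e2 := l2.exp
    have e5 := l5.exp
    have := (((hasDerivAt_id x).const_mul (3 : ℝ)).sub_const 1).add e2 |>.sub
      (e5.const_mul (1/10 : ℝ))
    convert this using 1
    · rfl
    · rfl
    · rfl
    · ring
  have hmono : StrictMonoOn F (Set.Ici 0) := by
    apply strictMonoOn_of_deriv_pos (convex_Ici 0)
      (fun x _ => (hderiv x).differentiableAt.continuousAt.continuousWithinAt)
    intro x hx
    rw [(hderiv x).deriv]
    rw [interior_Ici] at hx
    have h2 : exp (-2 * x) < 1 := exp_lt_one_iff.mpr (by nlinarith [Set.mem_Ioi.mp hx])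
    have h5 := exp_pos (-5 * x)
    nlinarith
  refine ⟨h0, h1, hmono, ?_⟩
  have hcont : ContinuousOn F (Set.Icc 0 1) :=
    fun x _ => (hderiv x).differentiableAt.continuousAt.continuousWithinAt
  obtain ⟨x, hx, hfx⟩ := intermediate_value_Ioo (by norm_num : (0:ℝ) ≤ 1) hcont
    (Set.mem_Ioo.mpr ⟨h0, h1⟩)
  refine ⟨x, ⟨hx, hfx⟩, ?_⟩
  rintro y ⟨hy, hfy⟩
  have hxI : x ∈ Set.Ici (0:ℝ) := le_of_lt hx.1
  have hyI : y ∈ Set.Ici (0:ℝ) := le_of_lt hy.1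
  exact hmono.injOn hyI hxI (by rw [hfy, hfx])
end
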